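/- arXiv:1906.01808 — 5 statements merged into one kernel-verified Lean document; each statement's English description precedes it below -/
import Mathlib

section
/- For every unit vector n in R^3, every wall temperature T_w > 0, every r_perp in (0,1], every r_parallel in (0,2), and every u in R^3 with n·u > 0, the Cercignani–Lampis scattering kernel is normalized: the integral of R(u→v) over the set {v in R^3 : n·v < 0} (with respect to Lebesgue measure dv) equals 1. -/
open MeasureTheory Real

noncomputable def besselI0 (y : ℝ) : ℝ :=
  (1 / Real.pi) * ∫ φ in (0:ℝ)..Real.pi, Real.exp (y * Real.cos φ)

noncomputable def CLkernel (n : EuclideanSpace ℝ (Fin 3)) (Tw rPerp rPar : ℝ)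
    (u v : EuclideanSpace ℝ (Fin 3)) : ℝ :=
  (2 / (Real.pi * rPerp * rPar * (2 - rPar))) * (|(inner ℝ n v : ℝ)| / (2 * Tw) ^ 2) *
    Real.exp (-(1 / (2 * Tw)) *
      (((inner ℝ n v : ℝ) ^ 2 + (1 - rPerp) * (inner ℝ n u : ℝ) ^ 2) / rPerp
        + ‖(v - (inner ℝ n v : ℝ) • n) - (1 - rPar) • (u - (inner ℝ n u : ℝ) • n)‖ ^ 2
            / (rPar * (2 - rPar)))) *
    besselI0 (Real.sqrt (1 - rPerp) * (inner ℝ n v : ℝ) * (inner ℝ n u : ℝ) / (Tw * rPerp))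

/-!
In an orthonormal basis whose first vector is `n`, the kernel splits into a product of three
one-dimensional densities: the two tangential factors are Gaussian densities with mean
`(1 - r∥) u∥` and variance `T_w r∥ (2 - r∥)`, and the normal factor, evaluated at `|n·v|`, is the
Rice density with noncentrality `√(1 - r⊥) (n·u)` and scale `T_w r⊥`. Each factor integrates to
one. For the Rice density this is the normalization of a shifted planar Gaussian written in polar
coordinates: integrating `exp (y cos θ)` over the angle produces `2π I₀(y)`.
-/

open Set ProbabilityTheory
open scoped NNReal

theorem besselI0_neg (y : ℝ) : besselI0 (-y) = besselI0 y := by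
  have := intervalIntegral.integral_comp_sub_left (fun φ => exp (y * cos φ)) (a := 0) (b := π) π
  simp only [cos_pi_sub, sub_zero, sub_self, mul_neg] at this
  simp only [besselI0, neg_mul, this]

theorem besselI0_abs (y : ℝ) : besselI0 |y| = besselI0 y := by
  rcases abs_choice y with h | h <;> rw [h]
  exact besselI0_neg y

theorem integral_Ioo_neg_pi_pi_exp_mul_cos (y : ℝ) :
    ∫ θ in Ioo (-π) π, exp (y * cos θ) = 2 * π * besselI0 y := by
  have hcont : Continuous fun θ => exp (y * cos θ) := by fun_prop
  have hsymm : ∫ θ in (-π)..0, exp (y * cos θ) = ∫ θ in 0..π, exp (y * cos θ) := by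
    simpa only [cos_neg, neg_zero] using
      (intervalIntegral.integral_comp_neg (a := 0) (b := π) fun θ => exp (y * cos θ)).symm
  rw [Measure.restrict_congr_set Ioo_ae_eq_Ioc,
    ← intervalIntegral.integral_of_le (by linarith [pi_pos]),
    ← intervalIntegral.integral_add_adjacent_intervals (b := 0) (hcont.intervalIntegrable _ _)
      (hcont.intervalIntegrable _ _), hsymm, besselI0]
  field_simp
  ring

theorem integrableOn_comp_polarCoord_symm {E : Type*} [NormedAddCommGroup E] [NormedSpace ℝ E]
    {f : ℝ × ℝ → E} (hf : Integrable f) :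
    IntegrableOn (fun p => p.1 • f (polarCoord.symm p)) polarCoord.target := by
  have h := (integrableOn_image_iff_integrableOn_abs_det_fderiv_smul volume
    polarCoord.open_target.measurableSet
    (fun p _ => (hasFDerivAt_polarCoord_symm p).hasFDerivWithinAt) polarCoord.symm.injOn f).mp
  rw [polarCoord.symm_image_target_eq_source] at h
  refine (h hf.integrableOn).congr_fun (fun p hp => ?_) polarCoord.open_target.measurableSet
  simp only [det_fderivPolarCoordSymm, abs_of_pos (show 0 < p.1 from hp.1)]

noncomputable def ricePDFReal (ν : ℝ) (v : ℝ≥0) (r : ℝ) : ℝ :=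
  r / v * exp (-(r ^ 2 + ν ^ 2) / (2 * v)) * besselI0 (r * ν / v)

theorem mul_gaussianPDFReal_mul_gaussianPDFReal_polar (ν : ℝ) {v : ℝ≥0} (hv : v ≠ 0)
    (r θ : ℝ) :
    r * (gaussianPDFReal ν v (r * cos θ) * gaussianPDFReal 0 v (r * sin θ)) =
      (2 * π)⁻¹ * (r / v * exp (-(r ^ 2 + ν ^ 2) / (2 * v))) * exp (r * ν / v * cos θ) := by
  have hsqrt : (√(2 * π * v))⁻¹ * (√(2 * π * v))⁻¹ = (2 * π * v)⁻¹ := by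
    rw [← mul_inv, mul_self_sqrt (by positivity)]
  have hexp : -(r * cos θ - ν) ^ 2 / (2 * v) + -(r * sin θ - 0) ^ 2 / (2 * v) =
      -(r ^ 2 + ν ^ 2) / (2 * v) + r * ν / v * cos θ := by
    field_simp
    linear_combination (-r ^ 2) * sin_sq_add_cos_sq θ
  simp only [gaussianPDFReal]
  calc _ = r * ((√(2 * π * v))⁻¹ * (√(2 * π * v))⁻¹) *
        exp (-(r * cos θ - ν) ^ 2 / (2 * v) + -(r * sin θ - 0) ^ 2 / (2 * v)) := by
        rw [exp_add]; ring
    _ = _ := by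
        rw [hsqrt, hexp, exp_add]
        field_simp

theorem integral_Ioi_ricePDFReal (ν : ℝ) {v : ℝ≥0} (hv : v ≠ 0) :
    ∫ r in Ioi 0, ricePDFReal ν v r = 1 := by
  set f : ℝ × ℝ → ℝ := fun p => gaussianPDFReal ν v p.1 * gaussianPDFReal 0 v p.2
  have hf : Integrable f :=
    (integrable_gaussianPDFReal ν v).mul_prod (integrable_gaussianPDFReal 0 v)
  have hf_one : ∫ p, f p = 1 := by
    rw [Measure.volume_eq_prod, integral_prod_mul, integral_gaussianPDFReal_eq_one _ hv,
      integral_gaussianPDFReal_eq_one _ hv, one_mul]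
  have hint := integrableOn_comp_polarCoord_symm hf
  rw [← hf_one, ← integral_comp_polarCoord_symm, polarCoord_target, Measure.volume_eq_prod,
    setIntegral_prod _ (by rwa [polarCoord_target] at hint)]
  refine setIntegral_congr_fun measurableSet_Ioi fun r _ => ?_
  simp only [f, polarCoord_symm_apply, smul_eq_mul,
    mul_gaussianPDFReal_mul_gaussianPDFReal_polar ν hv, integral_const_mul,
    integral_Ioo_neg_pi_pi_exp_mul_cos, ricePDFReal]
  field_simp

theorem integral_Iio_ricePDFReal_abs (ν : ℝ) {v : ℝ≥0} (hv : v ≠ 0) :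
    ∫ t in Iio 0, ricePDFReal ν v |t| = 1 := by
  rw [Measure.restrict_congr_set Iio_ae_eq_Iic, ← neg_zero, ← integral_comp_neg_Ioi]
  refine (setIntegral_congr_fun measurableSet_Ioi fun r (hr : 0 < r) => ?_).trans
    (integral_Ioi_ricePDFReal ν hv)
  rw [abs_neg, abs_of_pos hr]

section Coordinates

variable {E : Type*} [NormedAddCommGroup E] [InnerProductSpace ℝ E]

theorem exists_orthonormalBasis_apply_eq [FiniteDimensional ℝ E] {ι : Type*} [Fintype ι]
    (hE : Module.finrank ℝ E = Fintype.card ι) (i : ι) {n : E} (hn : ‖n‖ = 1) :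
    ∃ b : OrthonormalBasis ι ℝ E, b i = n := by
  have hsingle : Orthonormal ℝ (({i} : Set ι).domRestrict fun _ => n) :=
    ⟨fun _ => hn, fun j k hjk => absurd (Subtype.ext (j.2.trans k.2.symm)) hjk⟩
  obtain ⟨b, hb⟩ := hsingle.exists_orthonormalBasis_extension_of_card_eq hE
  exact ⟨b, hb i rfl⟩

theorem norm_sub_inner_smul_sq (b : OrthonormalBasis (Fin 3) ℝ E) (w : E) :
    ‖w - (inner ℝ (b 0) w : ℝ) • b 0‖ ^ 2 = (inner ℝ (b 1) w : ℝ) ^ 2 + (inner ℝ (b 2) w) ^ 2 := by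
  rw [← b.sum_sq_inner_right, Fin.sum_univ_three]
  simp [inner_sub_right, inner_smul_right, b.orthonormal.inner_eq_zero, b.orthonormal.1]

variable [FiniteDimensional ℝ E] [MeasurableSpace E] [BorelSpace E]

theorem setIntegral_orthonormalBasis_repr_neg_mul (b : OrthonormalBasis (Fin 3) ℝ E)
    (f g h : ℝ → ℝ) :
    ∫ v in {v | b.repr v 0 < 0}, f (b.repr v 0) * g (b.repr v 1) * h (b.repr v 2) =
      (∫ t in Iio 0, f t) * (∫ t, g t) * ∫ t, h t := by
  let e : E ≃ᵐ (Fin 3 → ℝ) := b.measurableEquiv.trans (MeasurableEquiv.toLp 2 (Fin 3 → ℝ)).symm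
  have he : MeasurePreserving e :=
    (EuclideanSpace.volume_preserving_symm_measurableEquiv_toLp _).comp
      b.measurePreserving_measurableEquiv
  calc _ = ∫ x in {x : Fin 3 → ℝ | x 0 < 0}, f (x 0) * g (x 1) * h (x 2) :=
        he.setIntegral_preimage_emb e.measurableEmbedding _ _
    _ = _ := ?_
  rw [← integral_indicator (measurableSet_lt (measurable_pi_apply 0) measurable_const)]
  have := integral_fin_nat_prod_eq_prod (μ := fun _ => volume) ![(Iio 0).indicator f, g, h]
  simp only [Fin.prod_univ_three, ← volume_pi, Matrix.cons_val_zero, Matrix.cons_val_one,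
    Matrix.cons_val_two, Matrix.head_cons, Matrix.tail_cons] at this
  rw [← integral_indicator measurableSet_Iio, ← this]
  congr 1 with x
  by_cases hx : x 0 < 0 <;> simp [hx]

end Coordinates

theorem CLkernel_eq_ricePDFReal_mul_gaussianPDFReal
    (b : OrthonormalBasis (Fin 3) ℝ (EuclideanSpace ℝ (Fin 3))) {Tw rPerp rPar : ℝ}
    (hTw : 0 < Tw) (hrPerp : 0 < rPerp) (hrPerp' : rPerp ≤ 1) (hrPar : 0 < rPar)
    (hrPar' : rPar < 2) (u v : EuclideanSpace ℝ (Fin 3)) :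
    CLkernel (b 0) Tw rPerp rPar u v =
      ricePDFReal (√(1 - rPerp) * b.repr u 0) (Tw * rPerp).toNNReal |b.repr v 0| *
        gaussianPDFReal ((1 - rPar) * b.repr u 1) (Tw * rPar * (2 - rPar)).toNNReal (b.repr v 1) *
        gaussianPDFReal ((1 - rPar) * b.repr u 2) (Tw * rPar * (2 - rPar)).toNNReal
          (b.repr v 2) := by
  have htan : (v - (inner ℝ (b 0) v : ℝ) • b 0) - (1 - rPar) • (u - (inner ℝ (b 0) u : ℝ) • b 0)
      = (v - (1 - rPar) • u) - (inner ℝ (b 0) (v - (1 - rPar) • u) : ℝ) • b 0 := by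
    rw [inner_sub_right, inner_smul_right]
    module
  have hsqrt : √(1 - rPerp) ^ 2 = 1 - rPerp := sq_sqrt (by linarith)
  have hV : 0 < Tw * rPar * (2 - rPar) := mul_pos (mul_pos hTw hrPar) (by linarith)
  rw [CLkernel, htan, norm_sub_inner_smul_sq]
  simp only [← b.repr_apply_apply, map_sub, map_smul, PiLp.sub_apply, PiLp.smul_apply,
    smul_eq_mul, ricePDFReal, gaussianPDFReal, coe_toNNReal _ hV.le,
    coe_toNNReal _ (mul_pos hTw hrPerp).le]
  generalize b.repr v 0 = x₀, b.repr v 1 = x₁, b.repr v 2 = x₂, b.repr u 0 = u₀,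
    b.repr u 1 = u₁, b.repr u 2 = u₂
  have hbessel : besselI0 (|x₀| * (√(1 - rPerp) * u₀) / (Tw * rPerp)) =
      besselI0 (√(1 - rPerp) * x₀ * u₀ / (Tw * rPerp)) := by
    rw [← besselI0_abs, ← besselI0_abs (_ / _)]
    congr 1
    simp only [abs_div, abs_mul, abs_abs]
    ring
  have hexp : -(1 / (2 * Tw)) * ((x₀ ^ 2 + (1 - rPerp) * u₀ ^ 2) / rPerp +
      ((x₁ - (1 - rPar) * u₁) ^ 2 + (x₂ - (1 - rPar) * u₂) ^ 2) / (rPar * (2 - rPar))) =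
      -(|x₀| ^ 2 + (√(1 - rPerp) * u₀) ^ 2) / (2 * (Tw * rPerp)) +
        -(x₁ - (1 - rPar) * u₁) ^ 2 / (2 * (Tw * rPar * (2 - rPar))) +
        -(x₂ - (1 - rPar) * u₂) ^ 2 / (2 * (Tw * rPar * (2 - rPar))) := by
    have : 2 - rPar ≠ 0 := by linarith
    rw [sq_abs, mul_pow, hsqrt]
    field_simp
    ring
  rw [hbessel, hexp, exp_add, exp_add]
  field_simp
  rw [sq_sqrt (by positivity)]
  field_simp

theorem CL_normalization_general (n : EuclideanSpace ℝ (Fin 3)) (hn : ‖n‖ = 1)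
    (Tw : ℝ) (hTw : 0 < Tw) (rPerp rPar : ℝ)
    (hrPerp : 0 < rPerp) (hrPerp' : rPerp ≤ 1)
    (hrPar : 0 < rPar) (hrPar' : rPar < 2)
    (u : EuclideanSpace ℝ (Fin 3)) :
    ∫ v in {v : EuclideanSpace ℝ (Fin 3) | (inner ℝ n v : ℝ) < 0},
      CLkernel n Tw rPerp rPar u v = 1 := by
  obtain ⟨b, rfl⟩ := exists_orthonormalBasis_apply_eq (by simp) (0 : Fin 3) hn
  have hrice : (Tw * rPerp).toNNReal ≠ 0 := by simp [hTw, hrPerp]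
  have hgauss : (Tw * rPar * (2 - rPar)).toNNReal ≠ 0 := by simp [hTw, hrPar, hrPar']
  simp_rw [CLkernel_eq_ricePDFReal_mul_gaussianPDFReal b hTw hrPerp hrPerp' hrPar hrPar',
    ← b.repr_apply_apply]
  rw [setIntegral_orthonormalBasis_repr_neg_mul b (fun t => ricePDFReal _ _ |t|),
    integral_Iio_ricePDFReal_abs _ hrice, integral_gaussianPDFReal_eq_one _ hgauss,
    integral_gaussianPDFReal_eq_one _ hgauss, one_mul, one_mul]

/-- Normalization of the Cercignani–Lampis kernel:
`∫_{n·v<0} R(u→v) dv = 1` for every incoming `u` with `n·u > 0`. -/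
theorem CL_normalization (n : EuclideanSpace ℝ (Fin 3)) (hn : ‖n‖ = 1)
    (Tw : ℝ) (hTw : 0 < Tw) (rPerp rPar : ℝ)
    (hrPerp : 0 < rPerp) (hrPerp' : rPerp ≤ 1)
    (hrPar : 0 < rPar) (hrPar' : rPar < 2)
    (u : EuclideanSpace ℝ (Fin 3)) (hu : 0 < (inner ℝ n u : ℝ)) :
    ∫ v in {v : EuclideanSpace ℝ (Fin 3) | (inner ℝ n v : ℝ) < 0},
      CLkernel n Tw rPerp rPar u v = 1 :=
  CL_normalization_general n hn Tw hTw rPerp rPar hrPerp hrPerp' hrPar hrPar' u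
end

section
/- The Cercignani–Lampis kernel satisfies the reciprocity property: for every unit vector n in R^3, every T_w > 0, every r_perp in (0,1], every r_parallel in (0,2), and all u, v in R^3 with n·u > 0 and n·v < 0, one has R(u→v) = R(-v→-u) · ( e^{-|v|^2/(2T_w)} / e^{-|u|^2/(2T_w)} ) · ( |n·v| / |n·u| ). -/
open MeasureTheory Real

/-!
Split each velocity into its normal component `⟪n, w⟫` and its tangential part `w - ⟪n, w⟫ • n`.
Passing from `(u, v)` to `(-v, -u)` changes the Gaussian exponent of the kernel by exactly
`|v|² - |u|²`: for the normal components `a = n·u`, `b = n·v` the change is `r⊥ (b² - a²) / r⊥`,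
and for the tangential parts it comes from the identity
`‖x - c y‖² - ‖y - c x‖² = (1 - c²)(‖x‖² - ‖y‖²)` with `1 - (1 - r∥)² = r∥ (2 - r∥)`.
The Bessel factor is symmetric, and the prefactors `|n·v|` and `|n·(-u)|` account for the ratio
`|n·v| / |n·u|`.
-/

open scoped RealInnerProductSpace

section InnerProductSpace

variable {E : Type*} [NormedAddCommGroup E] [InnerProductSpace ℝ E]

def tangential (n w : E) : E := w - ⟪n, w⟫ • n

theorem tangential_neg (n w : E) : tangential n (-w) = -tangential n w := by
  simp only [tangential, inner_neg_right, neg_smul, sub_neg_eq_add, neg_sub']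

theorem norm_tangential_sq {n : E} (hn : ‖n‖ = 1) (w : E) :
    ‖tangential n w‖ ^ 2 = ‖w‖ ^ 2 - ⟪n, w⟫ ^ 2 := by
  rw [tangential, norm_sub_sq_real, real_inner_smul_right, real_inner_comm, norm_smul,
    Real.norm_eq_abs, hn, mul_one, sq_abs]
  ring

theorem norm_sub_smul_sq_sub_norm_sub_smul_sq (x y : E) (c : ℝ) :
    ‖x - c • y‖ ^ 2 - ‖y - c • x‖ ^ 2 = (1 - c ^ 2) * (‖x‖ ^ 2 - ‖y‖ ^ 2) := by
  rw [norm_sub_sq_real, norm_sub_sq_real, real_inner_smul_right, real_inner_smul_right,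
    real_inner_comm, norm_smul, norm_smul, Real.norm_eq_abs, mul_pow, mul_pow, sq_abs]
  ring

/-- The bracket in the exponent of the Cercignani–Lampis kernel `R(u → v)`. -/
noncomputable def clExponent (n : E) (rPerp rPar : ℝ) (u v : E) : ℝ :=
  (⟪n, v⟫ ^ 2 + (1 - rPerp) * ⟪n, u⟫ ^ 2) / rPerp
    + ‖tangential n v - (1 - rPar) • tangential n u‖ ^ 2 / (rPar * (2 - rPar))

theorem clExponent_eq_clExponent_neg_swap {n : E} (hn : ‖n‖ = 1) {rPerp rPar : ℝ}
    (hrPerp : rPerp ≠ 0) (hrPar : rPar ≠ 0) (hrPar' : rPar ≠ 2) (u v : E) :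
    clExponent n rPerp rPar u v = clExponent n rPerp rPar (-v) (-u) + ‖v‖ ^ 2 - ‖u‖ ^ 2 := by
  have hswap := norm_sub_smul_sq_sub_norm_sub_smul_sq (tangential n v) (tangential n u) (1 - rPar)
  rw [norm_tangential_sq hn, norm_tangential_sq hn] at hswap
  have hrPar2 : 2 - rPar ≠ 0 := sub_ne_zero.mpr hrPar'.symm
  have hnorm : ‖-tangential n u - (1 - rPar) • -tangential n v‖
      = ‖tangential n u - (1 - rPar) • tangential n v‖ := by
    rw [smul_neg, neg_sub_neg, norm_sub_rev]
  simp only [clExponent, tangential_neg, inner_neg_right, neg_sq, hnorm]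
  field_simp
  linear_combination rPerp * hswap

end InnerProductSpace

theorem CLkernel_eq_exp_clExponent (n : EuclideanSpace ℝ (Fin 3)) (Tw rPerp rPar : ℝ)
    (u v : EuclideanSpace ℝ (Fin 3)) :
    CLkernel n Tw rPerp rPar u v =
      (2 / (Real.pi * rPerp * rPar * (2 - rPar))) * (|⟪n, v⟫| / (2 * Tw) ^ 2) *
        Real.exp (-(1 / (2 * Tw)) * clExponent n rPerp rPar u v) *
        besselI0 (Real.sqrt (1 - rPerp) * ⟪n, v⟫ * ⟪n, u⟫ / (Tw * rPerp)) :=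
  rfl

theorem CL_reciprocity_general (n : EuclideanSpace ℝ (Fin 3)) (hn : ‖n‖ = 1)
    (Tw : ℝ) (rPerp rPar : ℝ)
    (hrPerp : 0 < rPerp)
    (hrPar : 0 < rPar) (hrPar' : rPar < 2)
    (u v : EuclideanSpace ℝ (Fin 3))
    (hu : 0 < (inner ℝ n u : ℝ)) :
    CLkernel n Tw rPerp rPar u v
      = CLkernel n Tw rPerp rPar (-v) (-u)
          * (Real.exp (-‖v‖ ^ 2 / (2 * Tw)) / Real.exp (-‖u‖ ^ 2 / (2 * Tw)))
          * (|(inner ℝ n v : ℝ)| / |(inner ℝ n u : ℝ)|) := by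
  have hexp : Real.exp (-(1 / (2 * Tw)) * clExponent n rPerp rPar u v)
      = Real.exp (-(1 / (2 * Tw)) * clExponent n rPerp rPar (-v) (-u))
          * (Real.exp (-‖v‖ ^ 2 / (2 * Tw)) / Real.exp (-‖u‖ ^ 2 / (2 * Tw))) := by
    rw [clExponent_eq_clExponent_neg_swap hn hrPerp.ne' hrPar.ne' hrPar'.ne, ← Real.exp_sub,
      ← Real.exp_add]
    ring_nf
  have hbessel : Real.sqrt (1 - rPerp) * ⟪n, -u⟫ * ⟪n, -v⟫ / (Tw * rPerp)
      = Real.sqrt (1 - rPerp) * ⟪n, v⟫ * ⟪n, u⟫ / (Tw * rPerp) := by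
    rw [inner_neg_right, inner_neg_right]
    ring
  have hu' : |⟪n, u⟫| ≠ 0 := abs_ne_zero.mpr hu.ne'
  rw [CLkernel_eq_exp_clExponent, CLkernel_eq_exp_clExponent, hexp, hbessel, inner_neg_right,
    abs_neg]
  field_simp

/-- Reciprocity of the Cercignani–Lampis kernel:
`R(u→v) = R(-v→-u) · (e^{-|v|²/(2T_w)}/e^{-|u|²/(2T_w)}) · (|n·v|/|n·u|)`. -/
theorem CL_reciprocity (n : EuclideanSpace ℝ (Fin 3)) (hn : ‖n‖ = 1)
    (Tw : ℝ) (hTw : 0 < Tw) (rPerp rPar : ℝ)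
    (hrPerp : 0 < rPerp) (hrPerp' : rPerp ≤ 1)
    (hrPar : 0 < rPar) (hrPar' : rPar < 2)
    (u v : EuclideanSpace ℝ (Fin 3))
    (hu : 0 < (inner ℝ n u : ℝ)) (hv : (inner ℝ n v : ℝ) < 0) :
    CLkernel n Tw rPerp rPar u v
      = CLkernel n Tw rPerp rPar (-v) (-u)
          * (Real.exp (-‖v‖ ^ 2 / (2 * Tw)) / Real.exp (-‖u‖ ^ 2 / (2 * Tw)))
          * (|(inner ℝ n v : ℝ)| / |(inner ℝ n u : ℝ)|) :=
  CL_reciprocity_general n hn Tw rPerp rPar hrPerp hrPar hrPar' u v hu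
end

section
/- Let a > 0, b > 0, ε > 0 with a + ε < b, let δ > 0, and let w ∈ R^2. Then (b/π) ∫_{ {v ∈ R^2 : |v - (b/(b-a-ε)) w| > δ^{-1}} } e^{ε|v|^2} e^{a|v|^2} e^{-b|v-w|^2} dv ≤ e^{-(b-a-ε) δ^{-2}} · ( b/(b-a-ε) ) · exp( ((a+ε)b/(b-a-ε)) |w|^2 ). -/
open MeasureTheory Real Set Filter

/-!
Completing the square turns the integrand into `exp K · exp (-(b - a - ε) ‖v - m‖²)` with
`m = (b / (b - a - ε)) • w` and `K = (a + ε) b / (b - a - ε) ‖w‖²`. After translating by `m`,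
the remaining tail of a planar Gaussian is computed in polar coordinates:
`∫_{‖u‖ > r} exp (-c ‖u‖²) du = 2π ∫_r^∞ y exp (-c y²) dy = (π / c) exp (-c r²)`.
So the inequality is in fact an equality.
-/

theorem integral_Ioi_mul_exp_neg_mul_sq {c : ℝ} (hc : 0 < c) (r : ℝ) :
    ∫ y in Ioi r, y * exp (-c * y ^ 2) = exp (-c * r ^ 2) / (2 * c) := by
  have hderiv : ∀ x ∈ Ici r, HasDerivAt (fun y => -exp (-c * y ^ 2) / (2 * c))
      (x * exp (-c * x ^ 2)) x := fun x _ => by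
    have h := ((((hasDerivAt_pow 2 x).const_mul (-c)).exp).neg).div_const (2 * c)
    refine h.congr_deriv ?_
    field_simp
    ring
  have hlim : Tendsto (fun y => -exp (-c * y ^ 2) / (2 * c)) atTop (nhds 0) := by
    have h := (tendsto_exp_atBot.comp
      (tendsto_neg_const_mul_pow_atTop two_ne_zero (neg_lt_zero.2 hc))).neg.div_const (2 * c)
    simpa using h
  rw [integral_Ioi_of_hasDerivAt_of_tendsto' hderiv
    (integrable_mul_exp_neg_mul_sq hc).integrableOn hlim]
  ring

theorem setIntegral_lt_norm_exp_neg_mul_sq {c r : ℝ} (hc : 0 < c) (hr : 0 ≤ r) :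
    ∫ u in {u : EuclideanSpace ℝ (Fin 2) | r < ‖u‖}, exp (-c * ‖u‖ ^ 2)
      = π / c * exp (-c * r ^ 2) := by
  set g : ℝ → ℝ := (Ioi r).indicator fun y => exp (-c * y ^ 2)
  have hset : MeasurableSet {u : EuclideanSpace ℝ (Fin 2) | r < ‖u‖} :=
    measurableSet_lt measurable_const measurable_norm
  have hradial : ∀ y : ℝ,
      y ^ (2 - 1) • g y = (Ioi r).indicator (fun y => y * exp (-c * y ^ 2)) y :=
    fun y => by by_cases h : y ∈ Ioi r <;> simp [g, h]
  calc ∫ u in {u : EuclideanSpace ℝ (Fin 2) | r < ‖u‖}, exp (-c * ‖u‖ ^ 2)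
      = ∫ u : EuclideanSpace ℝ (Fin 2), g ‖u‖ := by
        rw [← integral_indicator hset]
        rfl
    _ = 2 * π * ∫ y in Ioi r, y * exp (-c * y ^ 2) := by
        rw [integral_fun_norm_addHaar volume g, finrank_euclideanSpace_fin, measureReal_def,
          EuclideanSpace.volume_ball_fin_two, funext hradial,
          setIntegral_indicator measurableSet_Ioi, Ioi_inter_Ioi, max_eq_right hr]
        simp [pi_nonneg, mul_assoc]
    _ = π / c * exp (-c * r ^ 2) := by
        rw [integral_Ioi_mul_exp_neg_mul_sq hc]
        field_simp

theorem mul_norm_sq_sub_mul_norm_sub_sq {E : Type*} [NormedAddCommGroup E]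
    [InnerProductSpace ℝ E] {s b : ℝ} (hsb : b - s ≠ 0) (v w : E) :
    s * ‖v‖ ^ 2 - b * ‖v - w‖ ^ 2
      = s * b / (b - s) * ‖w‖ ^ 2 - (b - s) * ‖v - (b / (b - s)) • w‖ ^ 2 := by
  rw [norm_sub_sq_real, norm_sub_sq_real, real_inner_smul_right, norm_smul, mul_pow,
    Real.norm_eq_abs, sq_abs]
  field_simp
  ring

theorem gaussian_shift_tail_integral_general (a b ε δ : ℝ)
    (hab : a + ε < b) (hδ : 0 < δ) (w : EuclideanSpace ℝ (Fin 2)) :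
    (b / Real.pi) * ∫ v in {v : EuclideanSpace ℝ (Fin 2) |
          δ⁻¹ < ‖v - (b / (b - a - ε)) • w‖},
        Real.exp (ε * ‖v‖ ^ 2) * Real.exp (a * ‖v‖ ^ 2) * Real.exp (-b * ‖v - w‖ ^ 2)
      ≤ Real.exp (-(b - a - ε) * δ⁻¹ ^ 2) * (b / (b - a - ε))
          * Real.exp ((a + ε) * b / (b - a - ε) * ‖w‖ ^ 2) := by
  have hsquare : ∀ v : EuclideanSpace ℝ (Fin 2),
      exp (ε * ‖v‖ ^ 2) * exp (a * ‖v‖ ^ 2) * exp (-b * ‖v - w‖ ^ 2)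
        = exp ((a + ε) * b / (b - a - ε) * ‖w‖ ^ 2)
          * exp (-(b - a - ε) * ‖v - (b / (b - a - ε)) • w‖ ^ 2) := fun v => by
    have h := mul_norm_sq_sub_mul_norm_sub_sq (s := a + ε) (b := b) (by linarith) v w
    rw [← sub_sub] at h
    rw [← exp_add, ← exp_add, ← exp_add]
    congr 1
    linear_combination h
  set c := b - a - ε
  set m := (b / c) • w
  have htranslate := (measurePreserving_sub_right volume m).setIntegral_preimage_emb
    (Homeomorph.subRight m).measurableEmbedding (fun u => exp (-c * ‖u‖ ^ 2)) {u | δ⁻¹ < ‖u‖}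
  have hpreimage : {v | δ⁻¹ < ‖v - m‖} = (· - m) ⁻¹' {u | δ⁻¹ < ‖u‖} := rfl
  simp only [hsquare, integral_const_mul]
  rw [hpreimage, htranslate,
    setIntegral_lt_norm_exp_neg_mul_sq (by linarith) (inv_pos.2 hδ).le]
  apply le_of_eq
  field_simp

/-- For `a, b, ε > 0` with `a + ε < b`, `δ > 0` and `w ∈ ℝ²`,
`(b/π) ∫_{|v - (b/(b-a-ε))w| > δ⁻¹} e^{ε|v|²} e^{a|v|²} e^{-b|v-w|²} dv
  ≤ e^{-(b-a-ε)δ⁻²} (b/(b-a-ε)) exp(((a+ε)b/(b-a-ε)) |w|²)`. -/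
theorem gaussian_shift_tail_integral (a b ε δ : ℝ) (ha : 0 < a) (hb : 0 < b)
    (hε : 0 < ε) (hab : a + ε < b) (hδ : 0 < δ) (w : EuclideanSpace ℝ (Fin 2)) :
    (b / Real.pi) * ∫ v in {v : EuclideanSpace ℝ (Fin 2) |
          δ⁻¹ < ‖v - (b / (b - a - ε)) • w‖},
        Real.exp (ε * ‖v‖ ^ 2) * Real.exp (a * ‖v‖ ^ 2) * Real.exp (-b * ‖v - w‖ ^ 2)
      ≤ Real.exp (-(b - a - ε) * δ⁻¹ ^ 2) * (b / (b - a - ε))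
          * Real.exp ((a + ε) * b / (b - a - ε) * ‖w‖ ^ 2) :=
  gaussian_shift_tail_integral_general a b ε δ hab hδ w
end

section
/- Let a > 0, b > 0, ε > 0 with a + ε < b, let w ∈ R, and let δ > 0 satisfy δ (b - a - ε) ≤ 1. Then 2b ∫_0^δ v · e^{ε v^2} e^{a v^2} e^{-b v^2} e^{-b w^2} I_0(2 b v w) dv ≤ δ · ( b/(b-a-ε) ) · exp( ((a+ε)b/(b-a-ε)) w^2 ). -/
open MeasureTheory Real

lemma besselI0_continuous : Continuous besselI0 := by
  apply Continuous.mul continuous_const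
  exact intervalIntegral.continuous_parametric_intervalIntegral_of_continuous'
    (f := fun y φ => Real.exp (y * Real.cos φ))
    (by fun_prop) 0 Real.pi

lemma besselI0_le (y : ℝ) : besselI0 y ≤ Real.exp |y| := by
  have hπ : (0:ℝ) < Real.pi := Real.pi_pos
  have h : (∫ φ in (0:ℝ)..Real.pi, Real.exp (y * Real.cos φ))
      ≤ ∫ _φ in (0:ℝ)..Real.pi, Real.exp |y| := by
    apply intervalIntegral.integral_mono_on hπ.le
    · exact (Continuous.intervalIntegrable (by fun_prop) _ _)
    · exact intervalIntegrable_const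
    · intro φ _
      apply Real.exp_le_exp.2
      calc y * Real.cos φ ≤ |y * Real.cos φ| := le_abs_self _
        _ = |y| * |Real.cos φ| := abs_mul _ _
        _ ≤ |y| * 1 := by
            exact mul_le_mul_of_nonneg_left (Real.abs_cos_le_one φ) (abs_nonneg y)
        _ = |y| := mul_one _
  have : besselI0 y ≤ (1 / Real.pi) * (Real.pi * Real.exp |y|) := by
    unfold besselI0
    apply mul_le_mul_of_nonneg_left _ (by positivity)
    simpa using h
  calc besselI0 y ≤ (1 / Real.pi) * (Real.pi * Real.exp |y|) := this
    _ = Real.exp |y| := by field_simp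

/-- For `a, b, ε > 0` with `a + ε < b`, `w ∈ ℝ`, and `δ > 0` with `δ(b-a-ε) ≤ 1`,
`2b ∫_0^δ v e^{εv²} e^{av²} e^{-bv²} e^{-bw²} I₀(2bvw) dv
  ≤ δ (b/(b-a-ε)) exp(((a+ε)b/(b-a-ε)) w²)`. -/
theorem bessel_gaussian_integral_small (a b ε δ : ℝ) (ha : 0 < a) (hb : 0 < b)
    (hε : 0 < ε) (hab : a + ε < b) (hδ : 0 < δ) (hδ' : δ * (b - a - ε) ≤ 1) (w : ℝ) :
    2 * b * ∫ v in (0:ℝ)..δ,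
        v * Real.exp (ε * v ^ 2) * Real.exp (a * v ^ 2) * Real.exp (-b * v ^ 2)
          * Real.exp (-b * w ^ 2) * besselI0 (2 * b * v * w)
      ≤ δ * (b / (b - a - ε)) * Real.exp ((a + ε) * b / (b - a - ε) * w ^ 2) := by
  set c := b - a - ε with hc
  have hcpos : 0 < c := by simp [hc]; linarith
  set E := Real.exp ((a + ε) * b / c * w ^ 2) with hE
  have hEpos : 0 < E := Real.exp_pos _
  have hmono : (∫ v in (0:ℝ)..δ,
      v * Real.exp (ε * v ^ 2) * Real.exp (a * v ^ 2) * Real.exp (-b * v ^ 2)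
        * Real.exp (-b * w ^ 2) * besselI0 (2 * b * v * w))
      ≤ ∫ v in (0:ℝ)..δ, v * E := by
    apply intervalIntegral.integral_mono_on hδ.le
    · apply Continuous.intervalIntegrable
      exact (by fun_prop : Continuous fun v : ℝ =>
        v * Real.exp (ε * v ^ 2) * Real.exp (a * v ^ 2) * Real.exp (-b * v ^ 2)
          * Real.exp (-b * w ^ 2)).mul (besselI0_continuous.comp (by fun_prop))
    · exact Continuous.intervalIntegrable (by fun_prop) _ _
    · intro v hv
      have hv0 : 0 ≤ v := hv.1
      have key : Real.exp (ε * v ^ 2) * Real.exp (a * v ^ 2) * Real.exp (-b * v ^ 2)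
          * Real.exp (-b * w ^ 2) * besselI0 (2 * b * v * w) ≤ E := by
        have h1 : besselI0 (2 * b * v * w) ≤ Real.exp (2 * b * v * |w|) := by
          calc besselI0 (2 * b * v * w) ≤ Real.exp |2 * b * v * w| := besselI0_le _
            _ = Real.exp (2 * b * v * |w|) := by
                congr 1
                rw [abs_mul, abs_of_nonneg (by positivity : (0:ℝ) ≤ 2 * b * v)]
        calc Real.exp (ε * v ^ 2) * Real.exp (a * v ^ 2) * Real.exp (-b * v ^ 2)
              * Real.exp (-b * w ^ 2) * besselI0 (2 * b * v * w)
            ≤ Real.exp (ε * v ^ 2) * Real.exp (a * v ^ 2) * Real.exp (-b * v ^ 2)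
              * Real.exp (-b * w ^ 2) * Real.exp (2 * b * v * |w|) :=
              mul_le_mul_of_nonneg_left h1 (by positivity)
          _ = Real.exp (ε * v ^ 2 + a * v ^ 2 + (-b * v ^ 2) + (-b * w ^ 2)
                + 2 * b * v * |w|) := by
              rw [← Real.exp_add, ← Real.exp_add, ← Real.exp_add, ← Real.exp_add]
          _ ≤ E := by
              rw [hE]
              apply Real.exp_le_exp.2
              have hsq : 0 ≤ c * (v - b * |w| / c) ^ 2 := by positivity
              have hw2 : |w| ^ 2 = w ^ 2 := sq_abs w
              have hcne : c ≠ 0 := ne_of_gt hcpos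
              rw [div_mul_eq_mul_div, le_div_iff₀ hcpos, hc, ← sq_abs w]
              nlinarith [sq_nonneg ((b - a - ε) * v - b * |w|)]
      calc v * Real.exp (ε * v ^ 2) * Real.exp (a * v ^ 2) * Real.exp (-b * v ^ 2)
            * Real.exp (-b * w ^ 2) * besselI0 (2 * b * v * w)
          = v * (Real.exp (ε * v ^ 2) * Real.exp (a * v ^ 2) * Real.exp (-b * v ^ 2)
            * Real.exp (-b * w ^ 2) * besselI0 (2 * b * v * w)) := by ring
        _ ≤ v * E := mul_le_mul_of_nonneg_left key hv0
  have hint : (∫ v in (0:ℝ)..δ, v * E) = δ ^ 2 / 2 * E := by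
    rw [intervalIntegral.integral_mul_const]
    rw [integral_id]
    ring
  have h2 : 2 * b * ∫ v in (0:ℝ)..δ,
      v * Real.exp (ε * v ^ 2) * Real.exp (a * v ^ 2) * Real.exp (-b * v ^ 2)
        * Real.exp (-b * w ^ 2) * besselI0 (2 * b * v * w)
      ≤ 2 * b * (δ ^ 2 / 2 * E) := by
    rw [← hint]
    exact mul_le_mul_of_nonneg_left hmono (by positivity)
  refine h2.trans ?_
  have heq : 2 * b * (δ ^ 2 / 2 * E) = b * δ * E * δ := by ring
  rw [heq]
  have hδc : δ ≤ 1 / c := by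
    rw [le_div_iff₀ hcpos]; exact hδ'
  calc b * δ * E * δ ≤ b * δ * E * (1 / c) :=
        mul_le_mul_of_nonneg_left hδc (by positivity)
    _ = δ * (b / c) * E := by ring
end

section
/- Let m > 0 and n > 0. There exist constants C > 0 and δ_0 > 0 (depending only on m and n) such that for every δ with 0 < δ ≤ δ_0 and every u > 0, 2 m^2 ∫_{(n/m) u + δ^{-1}}^{∞} v · e^{-m^2 v^2} · I_0(2 m n v u) · e^{-n^2 u^2} dv ≤ C e^{-m^2/(4 δ^2)}. -/
/-!
Completing the square, `e^{-m²v²} e^{-n²u²} = e^{-t²} e^{-y}` with `t = mv - nu` and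
`y = 2mnvu`. Jordan's inequality `cos φ ≤ 1 - 2φ²/π²` and the Gaussian integral give
`I₀(y) ≤ e^y min(1, y^{-1/2})`, hence `m v I₀(y) e^{-y} ≤ 1 + 2t` uniformly in `u`: the factor
`v` is absorbed by `y^{-1/2}` when `mv ≤ 2nu`, and by `t` otherwise. On the range of
integration `t ≥ m/δ ≥ 1` once `δ ≤ m`, so the integrand is at most `(4/m) t e^{-t²}`, an exact
derivative, and the left-hand side is at most `4 e^{-m²/δ²}`.
-/

open MeasureTheory Real

open Filter Set Topology

lemma besselI0_nonneg (y : ℝ) : 0 ≤ besselI0 y :=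
  mul_nonneg (by positivity) <|
    intervalIntegral.integral_nonneg pi_pos.le fun _ _ => (exp_pos _).le

lemma besselI0_le_exp {y : ℝ} (hy : 0 ≤ y) : besselI0 y ≤ exp y := by
  have hle : ∫ φ in (0:ℝ)..π, exp (y * cos φ) ≤ ∫ _ in (0:ℝ)..π, exp y :=
    intervalIntegral.integral_mono_on pi_pos.le
      ((by fun_prop : Continuous _).intervalIntegrable _ _) intervalIntegrable_const
      fun φ _ => exp_le_exp.2 (mul_le_of_le_one_right hy (cos_le_one φ))
  rw [intervalIntegral.integral_const, smul_eq_mul, sub_zero] at hle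
  unfold besselI0
  calc 1 / π * ∫ φ in (0:ℝ)..π, exp (y * cos φ) ≤ 1 / π * (π * exp y) := by gcongr
    _ = exp y := by field_simp

lemma besselI0_le_exp_div_sqrt {y : ℝ} (hy : 0 < y) : besselI0 y ≤ exp y / √y := by
  set b := 2 * y / π ^ 2
  have hb : 0 < b := by positivity
  have hle : ∫ φ in (0:ℝ)..π, exp (y * cos φ) ≤ ∫ φ in (0:ℝ)..π, exp y * exp (-b * φ ^ 2) := by
    refine intervalIntegral.integral_mono_on pi_pos.le
      ((by fun_prop : Continuous _).intervalIntegrable _ _)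
      ((by fun_prop : Continuous _).intervalIntegrable _ _) fun φ hφ => ?_
    rw [← exp_add, exp_le_exp]
    have := cos_le_one_sub_mul_cos_sq (abs_le.2 ⟨by linarith [pi_pos, hφ.1], hφ.2⟩)
    have : y * cos φ ≤ y * (1 - 2 / π ^ 2 * φ ^ 2) := by gcongr
    linarith [show y * (1 - 2 / π ^ 2 * φ ^ 2) = y + -b * φ ^ 2 by ring]
  have htail : ∫ φ in (0:ℝ)..π, exp (-b * φ ^ 2) ≤ √(π / b) / 2 := by
    rw [intervalIntegral.integral_of_le pi_pos.le, ← integral_gaussian_Ioi]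
    exact setIntegral_mono_set (integrable_exp_neg_mul_sq hb).integrableOn
      (.of_forall fun _ => (exp_pos _).le) (.of_forall fun _ hx => hx.1)
  have hconst : 1 / π * (√(π / b) / 2) ≤ 1 / √y := by
    calc 1 / π * (√(π / b) / 2) = √(π / (8 * y)) := by
          rw [show π / (8 * y) = (1 / π * (1 / 2)) ^ 2 * (π / b) by simp only [b]; field_simp; ring,
            sqrt_mul (by positivity), sqrt_sq (by positivity)]
          ring
      _ ≤ √(1 / y) := sqrt_le_sqrt <| by
          rw [div_le_div_iff₀ (by positivity) hy]; nlinarith [pi_lt_four]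
      _ = 1 / √y := by rw [sqrt_div' _ hy.le, sqrt_one]
  rw [intervalIntegral.integral_const_mul] at hle
  calc besselI0 y ≤ 1 / π * (exp y * (√(π / b) / 2)) := by
        unfold besselI0; gcongr; exact hle.trans (by gcongr)
    _ = exp y * (1 / π * (√(π / b) / 2)) := by ring
    _ ≤ exp y * (1 / √y) := by gcongr
    _ = exp y / √y := by ring

lemma mul_besselI0_two_mul_le {x w : ℝ} (hw : 0 < w) (hwx : w ≤ x) :
    x * besselI0 (2 * x * w) ≤ (1 + 2 * (x - w)) * exp (2 * x * w) := by
  have hx0 : 0 < x := hw.trans_le hwx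
  have hy : 0 < 2 * x * w := by positivity
  rcases le_or_gt x (2 * w) with hx | hx
  · have hx_le : x ≤ √(2 * x * w) := le_sqrt_of_sq_le (by nlinarith)
    calc x * besselI0 (2 * x * w) ≤ √(2 * x * w) * (exp (2 * x * w) / √(2 * x * w)) :=
          mul_le_mul hx_le (besselI0_le_exp_div_sqrt hy) (besselI0_nonneg _) (sqrt_nonneg _)
      _ = exp (2 * x * w) := mul_div_cancel₀ _ (sqrt_pos.2 hy).ne'
      _ ≤ (1 + 2 * (x - w)) * exp (2 * x * w) :=
          le_mul_of_one_le_left (exp_pos _).le (by linarith)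
  · calc x * besselI0 (2 * x * w) ≤ x * exp (2 * x * w) := by
          gcongr
          exact besselI0_le_exp hy.le
      _ ≤ (1 + 2 * (x - w)) * exp (2 * x * w) := by gcongr; linarith

lemma hasDerivAt_neg_exp_neg_sq_sub (m c v : ℝ) :
    HasDerivAt (fun v => -exp (-(m * v - c) ^ 2))
      (2 * m * (m * v - c) * exp (-(m * v - c) ^ 2)) v := by
  have h : HasDerivAt (fun v => m * v - c) m v := by
    simpa using ((hasDerivAt_id v).const_mul m).sub_const c
  refine ((h.pow 2).neg.exp).neg.congr_deriv ?_
  simp only [Pi.pow_apply, Pi.neg_apply]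
  ring

lemma tendsto_neg_exp_neg_sq_sub {m : ℝ} (hm : 0 < m) (c : ℝ) :
    Tendsto (fun v => -exp (-(m * v - c) ^ 2)) atTop (𝓝 0) := by
  have : Tendsto (fun v => m * v - c) atTop atTop :=
    tendsto_atTop_add_const_right _ _ (tendsto_id.const_mul_atTop hm)
  simpa using (tendsto_exp_neg_atTop_nhds_zero.comp
    ((tendsto_pow_atTop two_ne_zero).comp this)).neg

lemma integrableOn_Ioi_mul_exp_neg_sq_sub {m c a : ℝ} (hm : 0 < m) (hca : c ≤ m * a) :
    IntegrableOn (fun v => 2 * m * (m * v - c) * exp (-(m * v - c) ^ 2)) (Ioi a) :=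
  integrableOn_Ioi_deriv_of_nonneg' (fun v _ => hasDerivAt_neg_exp_neg_sq_sub m c v)
    (fun v hv => by
      have : m * a < m * v := by gcongr; exact hv
      exact mul_nonneg (mul_nonneg (by positivity) (by linarith)) (exp_pos _).le)
    (tendsto_neg_exp_neg_sq_sub hm c)

lemma integral_Ioi_mul_exp_neg_sq_sub {m c a : ℝ} (hm : 0 < m) (hca : c ≤ m * a) :
    ∫ v in Ioi a, 2 * m * (m * v - c) * exp (-(m * v - c) ^ 2) = exp (-(m * a - c) ^ 2) := by
  rw [integral_Ioi_of_hasDerivAt_of_tendsto' (fun v _ => hasDerivAt_neg_exp_neg_sq_sub m c v)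
    (integrableOn_Ioi_mul_exp_neg_sq_sub hm hca) (tendsto_neg_exp_neg_sq_sub hm c)]
  ring

lemma bessel_gaussian_integrand_le {m n u v : ℝ} (hm : 0 < m) (hn : 0 < n) (hu : 0 < u)
    (hv : n * u + 1 ≤ m * v) :
    v * exp (-m ^ 2 * v ^ 2) * besselI0 (2 * m * n * v * u) * exp (-n ^ 2 * u ^ 2)
      ≤ 2 / m ^ 2 * (2 * m * (m * v - n * u) * exp (-(m * v - n * u) ^ 2)) := by
  set y := 2 * m * n * v * u
  set t := m * v - n * u
  have hI := mul_besselI0_two_mul_le (x := m * v) (w := n * u) (by positivity) (by linarith)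
  rw [show 2 * (m * v) * (n * u) = y by ring] at hI
  have hsplit : exp (-m ^ 2 * v ^ 2) * exp (-n ^ 2 * u ^ 2) = exp (-t ^ 2) * exp (-y) := by
    rw [← exp_add, ← exp_add]; congr 1; ring
  calc v * exp (-m ^ 2 * v ^ 2) * besselI0 y * exp (-n ^ 2 * u ^ 2)
        = m * v * besselI0 y * (exp (-m ^ 2 * v ^ 2) * exp (-n ^ 2 * u ^ 2)) / m := by
          field_simp
    _ = m * v * besselI0 y * exp (-y) * exp (-t ^ 2) / m := by rw [hsplit]; ring
    _ ≤ (1 + 2 * t) * exp y * exp (-y) * exp (-t ^ 2) / m := by gcongr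
    _ = (1 + 2 * t) * exp (-t ^ 2) / m := by rw [mul_assoc _ (exp y), ← exp_add]; simp
    _ ≤ 4 * t * exp (-t ^ 2) / m := by gcongr; linarith
    _ = 2 / m ^ 2 * (2 * m * t * exp (-t ^ 2)) := by field_simp; ring

lemma integral_Ioi_bessel_gaussian_le {m n u a : ℝ} (hm : 0 < m) (hn : 0 < n) (hu : 0 < u)
    (ha : n * u + 1 ≤ m * a) :
    ∫ v in Ioi a, v * exp (-m ^ 2 * v ^ 2) * besselI0 (2 * m * n * v * u) * exp (-n ^ 2 * u ^ 2)
      ≤ 2 / m ^ 2 * exp (-(m * a - n * u) ^ 2) := by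
  have hv : ∀ v ∈ Ioi a, n * u + 1 ≤ m * v := fun v hv => by
    have : m * a < m * v := by gcongr; exact hv
    linarith
  rw [← integral_Ioi_mul_exp_neg_sq_sub hm (by linarith), ← integral_const_mul]
  refine integral_mono_of_nonneg ?_
    ((integrableOn_Ioi_mul_exp_neg_sq_sub hm (by linarith)).const_mul _) ?_ <;>
    filter_upwards [ae_restrict_mem measurableSet_Ioi] with v hva
  · have : 0 < v := by nlinarith [hv v hva]
    have := besselI0_nonneg (2 * m * n * v * u)
    positivity
  · exact bessel_gaussian_integrand_le hm hn hu (hv v hva)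

/-- For `m, n > 0` there exist `C > 0` and `δ₀ > 0` such that for all `0 < δ ≤ δ₀`
and all `u > 0`,
`2m² ∫_{(n/m)u + δ⁻¹}^∞ v e^{-m²v²} I₀(2mnvu) e^{-n²u²} dv ≤ C e^{-m²/(4δ²)}`. -/
theorem bessel_gaussian_tail_smallness (m n : ℝ) (hm : 0 < m) (hn : 0 < n) :
    ∃ C > (0:ℝ), ∃ δ₀ > (0:ℝ), ∀ δ : ℝ, 0 < δ → δ ≤ δ₀ → ∀ u : ℝ, 0 < u →
      2 * m ^ 2 * ∫ v in Set.Ioi ((n / m) * u + δ⁻¹),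
          v * Real.exp (-m ^ 2 * v ^ 2) * besselI0 (2 * m * n * v * u)
            * Real.exp (-n ^ 2 * u ^ 2)
        ≤ C * Real.exp (-m ^ 2 / (4 * δ ^ 2)) := by
  refine ⟨4, by norm_num, m, hm, fun δ hδ hδm u hu => ?_⟩
  have hma : m * (n / m * u + δ⁻¹) - n * u = m / δ := by field_simp; ring
  have hmδ : 1 ≤ m / δ := (one_le_div hδ).2 hδm
  have hint := integral_Ioi_bessel_gaussian_le hm hn hu (a := n / m * u + δ⁻¹) (by linarith)
  rw [hma] at hint
  calc _ ≤ 2 * m ^ 2 * (2 / m ^ 2 * exp (-(m / δ) ^ 2)) := by gcongr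
    _ = 4 * exp (-(m / δ) ^ 2) := by field_simp; ring
    _ ≤ 4 * exp (-m ^ 2 / (4 * δ ^ 2)) := by
        gcongr
        rw [div_pow, neg_div, neg_le_neg_iff]
        gcongr
        linarith [pow_pos hδ 2]
end
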